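/- Assume the x_{m,p} are integers with x_{m,p} ≥ 1 for all m, p, let ε > 0, and let b_p, n_p > 0 for p ∈ {1,…,P}. Then the family r ↦ (K(x,r,+) − K(x,r,−)) · ∏_{p=1}^P e^(−(Y_p + r_p)·ε) · (1 + b_p·(Y_p + r_p))^(−n_p) is absolutely summable over r ∈ ℕ^P, and ∫_{(ε,∞)^P} [∏_{m=1}^M e^(−y_m·(X_m·β)) / (1 + e^(−(X_m·β)))] · ∏_{p=1}^P G(β_p − ε; b_p, n_p) dβ = Σ_{r ∈ ℕ^P} (K(x,r,+) − K(x,r,−)) · ∏_{p=1}^P e^(−(Y_p + r_p)·ε) · (1 + b_p·(Y_p + r_p))^(−n_p). -/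

import Mathlib

/-!
On `(ε, ∞)^P` every `u_m = X_m·β` is positive, so each logit factor is a geometric series,
`e^(−y u) / (1 + e^(−u)) = ∑_j (−1)^j e^(−(y + j) u)`, and their product is a series over
`k ∈ ℕ^M` with terms `(−1)^|k| e^(−∑_p c_p(k) β_p)`, where `c(k) = (y + k)ᵀ x`. Against the
translated Gamma densities the `k`-th term integrates to `∏_p e^(−c_p ε) (1 + b_p c_p)^(−n_p)`;
as `c_p(k) ≥ |k|` these integrals are dominated by `e^(−ε|k|)`, which justifies termwise
integration. Grouping the `k` by `r = kᵀ x`, whose fibres are finite because `x ≥ 1`, turns the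
signs `(−1)^|k|` into `K(x,r,+) − K(x,r,−)`.
-/

open MeasureTheory

/-- The Gamma density with scale `b` and shape `n`:
`G(z; b, n) = (1/(b·Γ(n)))·(z/b)^(n−1)·e^(−z/b)` for `z > 0`, and `0` for `z ≤ 0`. -/
noncomputable def gammaDensity (b n z : ℝ) : ℝ :=
  if 0 < z then 1 / (b * Real.Gamma n) * (z / b) ^ (n - 1) * Real.exp (-(z / b)) else 0

/-- `K(x,r,+)`, the number of `k ∈ ℕ^M` with `Σ_m k_m·x_{m,p} = r_p` for all `p`
and `|k|` even. -/
noncomputable def Kplus {M P : ℕ} (x : Fin M → Fin P → ℕ) (r : Fin P → ℕ) : ℕ :=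
  Nat.card {k : Fin M → ℕ // (∀ p, ∑ m, k m * x m p = r p) ∧ Even (∑ m, k m)}

/-- `K(x,r,−)`, the number of `k ∈ ℕ^M` with `Σ_m k_m·x_{m,p} = r_p` for all `p`
and `|k|` odd. -/
noncomputable def Kminus {M P : ℕ} (x : Fin M → Fin P → ℕ) (r : Fin P → ℕ) : ℕ :=
  Nat.card {k : Fin M → ℕ // (∀ p, ∑ m, k m * x m p = r p) ∧ Odd (∑ m, k m)}

open Real Set

section GammaLaplace

variable {b n : ℝ}

lemma gammaDensity_of_nonpos {z : ℝ} (hz : z ≤ 0) : gammaDensity b n z = 0 :=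
  if_neg hz.not_gt

lemma gammaDensity_nonneg (hb : 0 < b) (hn : 0 < n) (z : ℝ) : 0 ≤ gammaDensity b n z := by
  unfold gammaDensity
  split_ifs with hz
  · have := Gamma_pos_of_pos hn
    have := rpow_nonneg (div_pos hz hb).le (n - 1)
    positivity
  · exact le_rfl

lemma exp_mul_gammaDensity_eq_indicator (hb : 0 < b) (c : ℝ) :
    (fun s => exp (-(c * s)) * gammaDensity b n s) = (Ioi 0).indicator
      fun s => (b ^ n * Gamma n)⁻¹ * (s ^ (n - 1) * exp (-((c + b⁻¹) * s))) := by
  ext s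
  by_cases hs : 0 < s
  · have hbn : b ^ n = b ^ (n - 1) * b := by rw [← rpow_add_one hb.ne', sub_add_cancel]
    rw [indicator_of_mem (show s ∈ Ioi 0 from hs), gammaDensity, if_pos hs,
      div_rpow hs.le hb.le, hbn, add_mul, neg_add, exp_add]
    field_simp
  · rw [indicator_of_notMem (show s ∉ Ioi 0 from hs), gammaDensity_of_nonpos (not_lt.mp hs),
      mul_zero]

lemma integrable_exp_mul_gammaDensity (hb : 0 < b) (hn : 0 < n) {c : ℝ} (hc : 0 < 1 + b * c) :
    Integrable fun s => exp (-(c * s)) * gammaDensity b n s := by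
  have hbr : b * (c + b⁻¹) = 1 + b * c := by field_simp; ring
  have hr : 0 < c + b⁻¹ := pos_of_mul_pos_right (hbr ▸ hc) hb.le
  rw [exp_mul_gammaDensity_eq_indicator hb, integrable_indicator_iff measurableSet_Ioi]
  refine Integrable.const_mul ?_ _
  have h := integrableOn_rpow_mul_exp_neg_mul_rpow (s := n - 1) (by linarith) zero_lt_one hr
  simp only [rpow_one, neg_mul] at h
  exact h

lemma integral_exp_mul_gammaDensity (hb : 0 < b) (hn : 0 < n) {c : ℝ} (hc : 0 < 1 + b * c) :
    ∫ s, exp (-(c * s)) * gammaDensity b n s = (1 + b * c) ^ (-n) := by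
  have hbr : b * (c + b⁻¹) = 1 + b * c := by field_simp; ring
  have hr : 0 < c + b⁻¹ := pos_of_mul_pos_right (hbr ▸ hc) hb.le
  rw [exp_mul_gammaDensity_eq_indicator hb, integral_indicator measurableSet_Ioi,
    integral_const_mul, integral_rpow_mul_exp_neg_mul_Ioi hn hr, ← hbr,
    rpow_neg (by positivity), mul_rpow hb.le hr.le, one_div, inv_rpow hr.le]
  have := Gamma_pos_of_pos hn
  have := rpow_pos_of_pos hb n
  field_simp

noncomputable def translatedGammaLaplace (b n ε c : ℝ) : ℝ :=
  exp (-c * ε) * (1 + b * c) ^ (-n)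

lemma integrable_exp_mul_gammaDensity_sub (hb : 0 < b) (hn : 0 < n) {c : ℝ}
    (hc : 0 < 1 + b * c) (ε : ℝ) :
    Integrable fun t => exp (-(c * t)) * gammaDensity b n (t - ε) := by
  have h := ((integrable_exp_mul_gammaDensity hb hn hc).const_mul (exp (-c * ε))).comp_sub_right ε
  refine h.congr (Filter.Eventually.of_forall fun t => ?_)
  dsimp only
  rw [← mul_assoc, ← exp_add]
  ring_nf

lemma integral_exp_mul_gammaDensity_sub (hb : 0 < b) (hn : 0 < n) {c : ℝ}
    (hc : 0 < 1 + b * c) (ε : ℝ) :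
    ∫ t, exp (-(c * t)) * gammaDensity b n (t - ε) = translatedGammaLaplace b n ε c := by
  have h (t : ℝ) : exp (-(c * t)) * gammaDensity b n (t - ε)
      = exp (-c * ε) * (exp (-(c * (t - ε))) * gammaDensity b n (t - ε)) := by
    rw [← mul_assoc, ← exp_add]; ring_nf
  simp_rw [h]
  rw [integral_const_mul, integral_sub_right_eq_self
    (fun t => exp (-(c * t)) * gammaDensity b n t), integral_exp_mul_gammaDensity hb hn hc,
    translatedGammaLaplace]

lemma translatedGammaLaplace_nonneg {ε c : ℝ} (hc : 0 ≤ 1 + b * c) :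
    0 ≤ translatedGammaLaplace b n ε c :=
  mul_nonneg (exp_pos _).le (rpow_nonneg hc _)

lemma translatedGammaLaplace_le_exp {ε c : ℝ} (hb : 0 ≤ b) (hn : 0 ≤ n) (hc : 0 ≤ c) :
    translatedGammaLaplace b n ε c ≤ exp (-c * ε) :=
  mul_le_of_le_one_right (exp_pos _).le
    (rpow_le_one_of_one_le_of_nonpos (le_add_of_nonneg_right (mul_nonneg hb hc)) (by linarith))

end GammaLaplace

section PiSeries

variable {R κ : Type*} [NormedCommRing R]

lemma prod_consEquiv {M : ℕ} (f : Fin (M + 1) → κ → R) (jk : κ × (Fin M → κ)) :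
    ∏ i, f i (Fin.consEquiv (fun _ => κ) jk i) = f 0 jk.1 * ∏ i, f i.succ (jk.2 i) := by
  simp [Fin.consEquiv, Fin.prod_univ_succ]

lemma summable_norm_pi_prod {M : ℕ} {f : Fin M → κ → R} (hf : ∀ i, Summable fun j => ‖f i j‖) :
    Summable fun k : Fin M → κ => ‖∏ i, f i (k i)‖ := by
  induction M with
  | zero => exact (hasSum_fintype _).summable
  | succ M ih =>
    refine (Fin.consEquiv fun _ => κ).summable_iff.mp ?_
    simpa only [Function.comp_def, prod_consEquiv] using
      (hf 0).mul_norm (ih fun i => hf i.succ)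

lemma hasSum_pi_prod [CompleteSpace R] {M : ℕ} {f : Fin M → κ → R} {a : Fin M → R}
    (hf : ∀ i, Summable fun j => ‖f i j‖) (ha : ∀ i, HasSum (f i) (a i)) :
    HasSum (fun k : Fin M → κ => ∏ i, f i (k i)) (∏ i, a i) := by
  induction M with
  | zero => simp
  | succ M ih =>
    have hsum := summable_mul_of_summable_norm (hf 0) (summable_norm_pi_prod fun i => hf i.succ)
    have hmul := (ha 0).mul (ih (fun i => hf i.succ) fun i => ha i.succ) hsum
    refine (Fin.consEquiv fun _ => κ).hasSum_iff.mp ?_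
    rw [Fin.prod_univ_succ]
    simpa only [Function.comp_def, prod_consEquiv] using hmul

end PiSeries

open Matrix Finset

section ProductIntegral

variable {ι : Type*} [Fintype ι] {b n c : ι → ℝ}

lemma integrable_prod_exp_mul_gammaDensity_sub (hb : ∀ i, 0 < b i) (hn : ∀ i, 0 < n i)
    (hc : ∀ i, 0 < 1 + b i * c i) (ε : ℝ) :
    Integrable fun β : ι → ℝ => ∏ i, exp (-(c i * β i)) * gammaDensity (b i) (n i) (β i - ε) :=
  Integrable.fintype_prod (f := fun i t => exp (-(c i * t)) * gammaDensity (b i) (n i) (t - ε))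
    fun i => integrable_exp_mul_gammaDensity_sub (hb i) (hn i) (hc i) ε

lemma integral_prod_exp_mul_gammaDensity_sub (hb : ∀ i, 0 < b i) (hn : ∀ i, 0 < n i)
    (hc : ∀ i, 0 < 1 + b i * c i) (ε : ℝ) :
    ∫ β : ι → ℝ, ∏ i, exp (-(c i * β i)) * gammaDensity (b i) (n i) (β i - ε)
      = ∏ i, translatedGammaLaplace (b i) (n i) ε (c i) := by
  rw [integral_fintype_prod_volume_eq_prod
    (fun i t => exp (-(c i * t)) * gammaDensity (b i) (n i) (t - ε))]
  exact prod_congr rfl fun i _ => integral_exp_mul_gammaDensity_sub (hb i) (hn i) (hc i) ε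

end ProductIntegral

section LogitSeries

lemma neg_one_pow_mul_exp_eq (y u : ℝ) (j : ℕ) :
    (-1) ^ j * exp (-((y + j) * u)) = exp (-(y * u)) * (-exp (-u)) ^ j := by
  rw [neg_pow (exp (-u)), ← exp_nat_mul, mul_left_comm, ← exp_add]
  ring_nf

lemma norm_neg_exp_neg_lt_one {u : ℝ} (hu : 0 < u) : ‖-exp (-u)‖ < 1 := by
  rw [norm_neg, norm_of_nonneg (exp_pos _).le, exp_lt_one_iff]
  linarith

lemma hasSum_logit {u : ℝ} (hu : 0 < u) (y : ℝ) :
    HasSum (fun j : ℕ => (-1) ^ j * exp (-((y + j) * u))) (exp (-(y * u)) / (1 + exp (-u))) := by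
  simp_rw [neg_one_pow_mul_exp_eq, div_eq_mul_inv, ← sub_neg_eq_add (1 : ℝ)]
  exact (hasSum_geometric_of_norm_lt_one (norm_neg_exp_neg_lt_one hu)).mul_left _

lemma summable_norm_logit {u : ℝ} (hu : 0 < u) (y : ℝ) :
    Summable fun j : ℕ => ‖(-1) ^ j * exp (-((y + j) * u))‖ := by
  simp_rw [neg_one_pow_mul_exp_eq, norm_mul]
  exact (summable_norm_geometric_of_norm_lt_one (norm_neg_exp_neg_lt_one hu)).mul_left _

lemma hasSum_prod_logit {M : ℕ} {u : Fin M → ℝ} (hu : ∀ m, 0 < u m) (y : Fin M → ℝ) :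
    HasSum (fun k : Fin M → ℕ => (-1) ^ (∑ m, k m) * exp (-((y + fun m => (k m : ℝ)) ⬝ᵥ u)))
      (∏ m, exp (-(y m * u m)) / (1 + exp (-u m))) := by
  have h := hasSum_pi_prod (fun m => summable_norm_logit (hu m) (y m))
    (fun m => hasSum_logit (hu m) (y m))
  refine h.congr_fun fun k => ?_
  rw [prod_mul_distrib, prod_pow_eq_pow_sum, ← exp_sum, sum_neg_distrib]
  rfl

end LogitSeries

section LogitGammaIntegral

variable {M : ℕ} {ι : Type*} [Fintype ι] {X : Matrix (Fin M) ι ℝ} {y : Fin M → ℝ}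
  {b n : ι → ℝ} {ε : ℝ}

lemma prod_gammaDensity_sub_eq_zero {β : ι → ℝ} (hβ : β ∉ univ.pi fun _ => Ioi ε) :
    ∏ p, gammaDensity (b p) (n p) (β p - ε) = 0 := by
  simp only [Set.mem_univ_pi, Set.mem_Ioi, not_forall, not_lt] at hβ
  obtain ⟨p, hp⟩ := hβ
  exact prod_eq_zero (mem_univ p) (gammaDensity_of_nonpos (by linarith))

lemma prod_logit_mul_prod_gammaDensity_eq_tsum (hX : ∀ m p, 0 ≤ X m p)
    (hrow : ∀ m, ∃ p, 0 < X m p) (hε : 0 ≤ ε) (β : ι → ℝ) :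
    (∏ m, exp (-(y m * (X *ᵥ β) m)) / (1 + exp (-(X *ᵥ β) m))) *
        ∏ p, gammaDensity (b p) (n p) (β p - ε)
      = ∑' k : Fin M → ℕ, (-1) ^ (∑ m, k m) *
          ∏ p, exp (-(((y + fun m => (k m : ℝ)) ᵥ* X) p * β p)) *
            gammaDensity (b p) (n p) (β p - ε) := by
  have hterm (k : Fin M → ℕ) : ∏ p, exp (-(((y + fun m => (k m : ℝ)) ᵥ* X) p * β p)) *
      gammaDensity (b p) (n p) (β p - ε) = exp (-((y + fun m => (k m : ℝ)) ⬝ᵥ (X *ᵥ β))) *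
        ∏ p, gammaDensity (b p) (n p) (β p - ε) := by
    rw [prod_mul_distrib, ← exp_sum, sum_neg_distrib, dotProduct_mulVec]
    rfl
  simp_rw [hterm, ← mul_assoc]
  by_cases hβ : β ∈ univ.pi fun _ => Ioi ε
  · have hu (m : Fin M) : 0 < (X *ᵥ β) m := by
      have hβp (p : ι) : 0 < β p := hε.trans_lt (hβ p (mem_univ p))
      obtain ⟨p, hp⟩ := hrow m
      exact sum_pos' (fun q _ => mul_nonneg (hX m q) (hβp q).le)
        ⟨p, mem_univ p, mul_pos hp (hβp p)⟩
    exact ((hasSum_prod_logit hu y).mul_right _).tsum_eq.symm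
  · simp [prod_gammaDensity_sub_eq_zero hβ]

lemma integral_prod_logit_mul_prod_gammaDensity (hX : ∀ m p, 0 ≤ X m p)
    (hrow : ∀ m, ∃ p, 0 < X m p) (hy : ∀ m, 0 ≤ y m) (hε : 0 ≤ ε)
    (hb : ∀ p, 0 < b p) (hn : ∀ p, 0 < n p)
    (hsum : Summable fun k : Fin M → ℕ =>
      ∏ p, translatedGammaLaplace (b p) (n p) ε (((y + fun m => (k m : ℝ)) ᵥ* X) p)) :
    ∫ β in univ.pi fun _ => Ioi ε,
        (∏ m, exp (-(y m * (X *ᵥ β) m)) / (1 + exp (-(X *ᵥ β) m))) *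
          ∏ p, gammaDensity (b p) (n p) (β p - ε)
      = ∑' k : Fin M → ℕ, (-1) ^ (∑ m, k m) *
          ∏ p, translatedGammaLaplace (b p) (n p) ε (((y + fun m => (k m : ℝ)) ᵥ* X) p) := by
  set c : (Fin M → ℕ) → ι → ℝ := fun k => (y + fun m => (k m : ℝ)) ᵥ* X
  have hc (k : Fin M → ℕ) (p : ι) : 0 < 1 + b p * c k p := by
    have : 0 ≤ c k p := by
      simp only [c, vecMul, dotProduct]
      exact sum_nonneg fun m _ => mul_nonneg (add_nonneg (hy m) (Nat.cast_nonneg _)) (hX m p)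
    have := hb p
    positivity
  have hint (k : Fin M → ℕ) := integrable_prod_exp_mul_gammaDensity_sub hb hn (hc k) ε
  have hval (k : Fin M → ℕ) := integral_prod_exp_mul_gammaDensity_sub hb hn (hc k) ε
  have hnorm (k : Fin M → ℕ) : ∫ β : ι → ℝ, ‖(-1) ^ (∑ m, k m) *
      ∏ p, exp (-(c k p * β p)) * gammaDensity (b p) (n p) (β p - ε)‖
        = ∏ p, translatedGammaLaplace (b p) (n p) ε (c k p) := by
    simp_rw [norm_mul, norm_pow, norm_neg, norm_one, one_pow, one_mul]
    rw [← hval k]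
    refine integral_congr_ae (Filter.Eventually.of_forall fun β => norm_of_nonneg ?_)
    exact prod_nonneg fun p _ =>
      mul_nonneg (exp_pos _).le (gammaDensity_nonneg (hb p) (hn p) _)
  rw [setIntegral_eq_integral_of_forall_compl_eq_zero fun β hβ => by
      rw [prod_gammaDensity_sub_eq_zero hβ, mul_zero],
    integral_congr_ae (Filter.Eventually.of_forall
      (prod_logit_mul_prod_gammaDensity_eq_tsum hX hrow hε)),
    ← integral_tsum_of_summable_integral_norm (fun k => (hint k).const_mul _)
      (by simpa only [hnorm] using hsum)]
  simp_rw [integral_const_mul, hval]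
  rfl

section Regrouping

variable {M P : ℕ} {x : Matrix (Fin M) (Fin P) ℕ}

lemma sum_le_sum_vecMul (hrow : ∀ m, ∃ p, x m p ≠ 0) (k : Fin M → ℕ) :
    ∑ m, k m ≤ ∑ p, (k ᵥ* x) p := by
  simp only [vecMul, dotProduct]
  rw [sum_comm]
  refine sum_le_sum fun m _ => ?_
  obtain ⟨p, hp⟩ := hrow m
  calc k m ≤ k m * x m p := Nat.le_mul_of_pos_right _ (Nat.pos_of_ne_zero hp)
    _ ≤ ∑ q, k m * x m q := single_le_sum (f := fun q => k m * x m q) (by simp) (mem_univ p)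

lemma finite_vecMul_preimage_singleton (hrow : ∀ m, ∃ p, x m p ≠ 0) (r : Fin P → ℕ) :
    ((· ᵥ* x) ⁻¹' {r}).Finite := by
  refine (Set.Finite.pi fun _ : Fin M => Set.finite_Iic (∑ p, r p)).subset fun k hk m _ => ?_
  rw [Set.mem_preimage, Set.mem_singleton_iff] at hk
  calc k m ≤ ∑ m, k m := single_le_sum (by simp) (mem_univ m)
    _ ≤ ∑ p, r p := hk ▸ sum_le_sum_vecMul hrow k

lemma tsum_neg_one_pow_eq_card_even_sub_card_odd {α : Type*} [Finite α] (s : α → ℕ) :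
    ∑' a, (-1 : ℝ) ^ s a = Nat.card {a // Even (s a)} - Nat.card {a // Odd (s a)} := by
  classical
  have := Fintype.ofFinite α
  have hsign (a : α) : (-1 : ℝ) ^ s a
      = (if Even (s a) then 1 else 0) - (if Odd (s a) then 1 else 0) := by
    rcases Nat.even_or_odd (s a) with h | h
    · simp [h, h.neg_one_pow, Nat.not_odd_iff_even.mpr h]
    · simp [h, h.neg_one_pow, Nat.not_even_iff_odd.mpr h]
  simp only [tsum_fintype, hsign, sum_sub_distrib, sum_boole, Nat.card_eq_fintype_card,
    Fintype.card_subtype]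

lemma card_subtype_and_eq_card_vecMul_fiber (r : Fin P → ℕ) (q : (Fin M → ℕ) → Prop) :
    Nat.card {k : Fin M → ℕ // (∀ p, ∑ m, k m * x m p = r p) ∧ q k}
      = Nat.card {k : (· ᵥ* x) ⁻¹' {r} // q k.1} :=
  Nat.card_congr ((Equiv.subtypeSubtypeEquivSubtypeInter (· ∈ (· ᵥ* x) ⁻¹' {r}) q).trans
    (Equiv.subtypeEquivRight fun _ => by simp [funext_iff, vecMul, dotProduct])).symm

lemma hasSum_Kplus_sub_Kminus_mul (hrow : ∀ m, ∃ p, x m p ≠ 0) {g : (Fin P → ℕ) → ℝ}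
    (hg : Summable fun k : Fin M → ℕ => g (k ᵥ* x)) :
    HasSum (fun r => ((Kplus x r : ℝ) - Kminus x r) * g r)
      (∑' k : Fin M → ℕ, (-1) ^ (∑ m, k m) * g (k ᵥ* x)) := by
  have hsigned : Summable fun k : Fin M → ℕ => (-1 : ℝ) ^ (∑ m, k m) * g (k ᵥ* x) :=
    hg.norm.of_norm_bounded fun k => by simp
  refine (hsigned.hasSum.tsum_fiberwise (· ᵥ* x)).congr_fun fun r => ?_
  have := (finite_vecMul_preimage_singleton hrow r).to_subtype
  calc ((Kplus x r : ℝ) - Kminus x r) * g r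
      = (∑' k : (· ᵥ* x) ⁻¹' {r}, (-1 : ℝ) ^ (∑ m, k.1 m)) * g r := by
        unfold Kplus Kminus
        rw [tsum_neg_one_pow_eq_card_even_sub_card_odd,
          card_subtype_and_eq_card_vecMul_fiber, card_subtype_and_eq_card_vecMul_fiber]
    _ = ∑' k : (· ᵥ* x) ⁻¹' {r}, (-1 : ℝ) ^ (∑ m, k.1 m) * g (k.1 ᵥ* x) := by
        rw [← tsum_mul_right]
        refine tsum_congr fun k => ?_
        have hk : k.1 ᵥ* x = r := k.2
        rw [hk]

lemma summable_prod_translatedGammaLaplace (hrow : ∀ m, ∃ p, x m p ≠ 0) {Y b n : Fin P → ℝ}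
    (hY : ∀ p, 0 ≤ Y p) (hb : ∀ p, 0 ≤ b p) (hn : ∀ p, 0 ≤ n p) {ε : ℝ} (hε : 0 < ε) :
    Summable fun k : Fin M → ℕ =>
      ∏ p, translatedGammaLaplace (b p) (n p) ε (Y p + (k ᵥ* x) p) := by
  have hq : ‖exp (-ε)‖ < 1 := by
    rw [norm_of_nonneg (exp_pos _).le, exp_lt_one_iff]
    linarith
  have hc (k : Fin M → ℕ) (p : Fin P) : 0 ≤ Y p + (k ᵥ* x) p := by
    have := hY p
    positivity
  refine Summable.of_nonneg_of_le
    (fun k => prod_nonneg fun p _ => translatedGammaLaplace_nonneg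
      (add_nonneg zero_le_one (mul_nonneg (hb p) (hc k p))))
    (fun k => ?_) (summable_norm_pi_prod fun _ => summable_norm_geometric_of_norm_lt_one hq)
  calc ∏ p, translatedGammaLaplace (b p) (n p) ε (Y p + (k ᵥ* x) p)
      ≤ ∏ p, exp (-(Y p + (k ᵥ* x) p) * ε) :=
        prod_le_prod (fun p _ => translatedGammaLaplace_nonneg
            (add_nonneg zero_le_one (mul_nonneg (hb p) (hc k p))))
          fun p _ => translatedGammaLaplace_le_exp (hb p) (hn p) (hc k p)
    _ = exp (-(∑ p, (Y p + (k ᵥ* x) p)) * ε) := by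
        rw [← exp_sum, neg_mul, sum_mul, ← sum_neg_distrib]
        simp only [neg_mul]
    _ ≤ exp (-(∑ m, k m : ℕ) * ε) := by
        have hk : ((∑ m, k m : ℕ) : ℝ) ≤ ∑ p, (Y p + (k ᵥ* x) p) := by
          calc ((∑ m, k m : ℕ) : ℝ) ≤ ∑ p, ((k ᵥ* x) p : ℝ) := by
                exact_mod_cast sum_le_sum_vecMul hrow k
            _ ≤ _ := sum_le_sum fun p _ => le_add_of_nonneg_left (hY p)
        gcongr
    _ = ‖∏ m, exp (-ε) ^ k m‖ := by
        rw [prod_pow_eq_pow_sum, norm_pow, norm_of_nonneg (exp_pos _).le, ← exp_nat_mul]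
        ring_nf

end Regrouping

theorem integral_logit_translated_gamma_eq_tsum_diophantine_general (M P : ℕ) (hP : 1 ≤ P)
    (x : Fin M → Fin P → ℕ) (hx : ∀ m p, 1 ≤ x m p) (ε : ℝ) (hε : 0 < ε)
    (y : Fin M → ℝ) (hy : ∀ m, y m = 0 ∨ y m = 1)
    (b n : Fin P → ℝ) (hb : ∀ p, 0 < b p) (hn : ∀ p, 0 < n p) :
    Summable (fun r : Fin P → ℕ =>
      |((Kplus x r : ℝ) - (Kminus x r : ℝ)) *
        ∏ p, Real.exp (-((∑ m, y m * x m p) + r p) * ε) *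
          (1 + b p * ((∑ m, y m * x m p) + r p)) ^ (-(n p))|) ∧
    ∫ β in Set.univ.pi (fun _ : Fin P => Set.Ioi ε),
        (∏ m, Real.exp (-(y m * ∑ p, (x m p : ℝ) * β p)) /
            (1 + Real.exp (-(∑ p, (x m p : ℝ) * β p)))) *
          ∏ p, gammaDensity (b p) (n p) (β p - ε)
      = ∑' r : Fin P → ℕ,
          ((Kplus x r : ℝ) - (Kminus x r : ℝ)) *
            ∏ p, Real.exp (-((∑ m, y m * x m p) + r p) * ε) *
              (1 + b p * ((∑ m, y m * x m p) + r p)) ^ (-(n p)) := by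
  have hrow (m : Fin M) : ∃ p, x m p ≠ 0 := ⟨⟨0, hP⟩, Nat.one_le_iff_ne_zero.mp (hx m _)⟩
  have hy0 (m : Fin M) : 0 ≤ y m := by rcases hy m with h | h <;> simp [h]
  let X : Matrix (Fin M) (Fin P) ℝ := fun m p => x m p
  have hcoeff (k : Fin M → ℕ) :
      (y + fun m => (k m : ℝ)) ᵥ* X = fun p => (∑ m, y m * x m p) + (k ᵥ* x) p := by
    ext p
    simp [X, vecMul, dotProduct, add_mul, sum_add_distrib]
  have hY (p : Fin P) : 0 ≤ ∑ m, y m * x m p :=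
    sum_nonneg fun m _ => mul_nonneg (hy0 m) (Nat.cast_nonneg _)
  have hsum : Summable fun k : Fin M → ℕ =>
      ∏ p, translatedGammaLaplace (b p) (n p) ε ((∑ m, y m * x m p) + (k ᵥ* x) p) :=
    summable_prod_translatedGammaLaplace hrow hY (fun p => (hb p).le) (fun p => (hn p).le) hε
  have hreg : HasSum (fun r : Fin P → ℕ => ((Kplus x r : ℝ) - Kminus x r) *
      ∏ p, translatedGammaLaplace (b p) (n p) ε ((∑ m, y m * x m p) + r p))
      (∑' k : Fin M → ℕ, (-1) ^ (∑ m, k m) *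
        ∏ p, translatedGammaLaplace (b p) (n p) ε ((∑ m, y m * x m p) + (k ᵥ* x) p)) :=
    hasSum_Kplus_sub_Kminus_mul hrow hsum
  refine ⟨hreg.summable.abs, ?_⟩
  calc _ = ∑' k : Fin M → ℕ, (-1) ^ (∑ m, k m) *
        ∏ p, translatedGammaLaplace (b p) (n p) ε (((y + fun m => (k m : ℝ)) ᵥ* X) p) :=
      integral_prod_logit_mul_prod_gammaDensity (fun m p => Nat.cast_nonneg _)
        (fun m => (hrow m).imp fun p hp => Nat.cast_pos.mpr (Nat.pos_of_ne_zero hp)) hy0 hε.le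
        hb hn (by simpa only [hcoeff] using hsum)
    _ = _ := by
      simp only [hcoeff]
      exact hreg.tsum_eq.symm

/-- Exponentially convergent regrouped series expansion of the marginalized logit likelihood
against a product of independent `ε`-translated Gamma priors
(equation (25) of the paper, for one household). -/
theorem integral_logit_translated_gamma_eq_tsum_diophantine (M P : ℕ) (hM : 1 ≤ M) (hP : 1 ≤ P)
    (x : Fin M → Fin P → ℕ) (hx : ∀ m p, 1 ≤ x m p) (ε : ℝ) (hε : 0 < ε)
    (y : Fin M → ℝ) (hy : ∀ m, y m = 0 ∨ y m = 1)
    (b n : Fin P → ℝ) (hb : ∀ p, 0 < b p) (hn : ∀ p, 0 < n p) :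
    Summable (fun r : Fin P → ℕ =>
      |((Kplus x r : ℝ) - (Kminus x r : ℝ)) *
        ∏ p, Real.exp (-((∑ m, y m * x m p) + r p) * ε) *
          (1 + b p * ((∑ m, y m * x m p) + r p)) ^ (-(n p))|) ∧
    ∫ β in Set.univ.pi (fun _ : Fin P => Set.Ioi ε),
        (∏ m, Real.exp (-(y m * ∑ p, (x m p : ℝ) * β p)) /
            (1 + Real.exp (-(∑ p, (x m p : ℝ) * β p)))) *
          ∏ p, gammaDensity (b p) (n p) (β p - ε)
      = ∑' r : Fin P → ℕ,
          ((Kplus x r : ℝ) - (Kminus x r : ℝ)) *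
            ∏ p, Real.exp (-((∑ m, y m * x m p) + r p) * ε) *
              (1 + b p * ((∑ m, y m * x m p) + r p)) ^ (-(n p)) :=
  integral_logit_translated_gamma_eq_tsum_diophantine_general M P hP x hx ε hε y hy b n hb hn
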